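/- arXiv:0912.5271 — 3 statements merged into one kernel-verified Lean document; each statement's English description precedes it below -/
import Mathlib

section
/- Let I: S → [0,∞] be defined by I(f) = (1/2) inf{‖h‖² : h ∈ H, Z₀(h) = f}, where H is a Hilbert space, S a metric space, and Z₀: H → S a map such that for every N, the image under Z₀ of any sequence in the closed ball of radius N that converges weakly has a subsequence whose images converge in S to the image of the weak limit. Then for every a < ∞, the sublevel set {f ∈ S : I(f) ≤ a} is compact in S. -/
open scoped RealInnerProductSpace ENNReal
open Filter Topology Set Metric

/-! Closed balls of a separable Hilbert space are weakly sequentially compact (sequential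
Banach–Alaoglu transported through the Riesz representation), so (LD)₂ makes every image
`Z₀ '' closedBall 0 r` compact. The sublevel set `{I ≤ a}` is the intersection of the images
`Z₀ '' {‖h‖² ≤ b}` over `2a < b < ∞`, hence a closed subset of one of them; intersecting over
`b` avoids having to show that the infimum defining `I` is attained. -/

theorem exists_subseq_weak_tendsto_of_norm_le {𝕜 E : Type*} [RCLike 𝕜]
    [NormedAddCommGroup E] [InnerProductSpace 𝕜 E] [CompleteSpace E]
    [TopologicalSpace.SeparableSpace E] {r : ℝ} {x : ℕ → E} (hx : ∀ n, ‖x n‖ ≤ r) :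
    ∃ y : E, ‖y‖ ≤ r ∧ ∃ k : ℕ → ℕ, StrictMono k ∧
      ∀ φ : E, Tendsto (fun n => inner 𝕜 (x (k n)) φ) atTop (𝓝 (inner 𝕜 y φ)) := by
  let u : ℕ → WeakDual 𝕜 E := fun n => StrongDual.toWeakDual (InnerProductSpace.toDual 𝕜 E (x n))
  have hu : ∀ n, u n ∈ WeakDual.toStrongDual ⁻¹' closedBall 0 r := fun n => by
    simpa [u] using hx n
  obtain ⟨ℓ, hℓ, k, hk, hlim⟩ := WeakDual.isSeqCompact_closedBall 𝕜 E 0 r hu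
  refine ⟨(InnerProductSpace.toDual 𝕜 E).symm (WeakDual.toStrongDual ℓ), by simpa using hℓ,
    k, hk, fun φ => ?_⟩
  simpa [u, Function.comp_def] using ((WeakDual.eval_continuous φ).tendsto ℓ).comp hlim

theorem setOf_iInf_fiber_le_eq_biInter {α β γ : Type*} [CompleteLinearOrder γ] [DenselyOrdered γ]
    (Z : α → β) (E : α → γ) (a : γ) :
    {y | ⨅ (x) (_ : Z x = y), E x ≤ a} = ⋂ b ∈ Ioo a ⊤, Z '' {x | E x ≤ b} := by
  ext y
  simp only [mem_ofPred_eq, mem_iInter, mem_Ioo, mem_image]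
  constructor
  · rintro hy b ⟨hab, -⟩
    obtain ⟨x, hx⟩ := iInf_lt_iff.mp (hy.trans_lt hab)
    obtain ⟨rfl, hxb⟩ := iInf_lt_iff.mp hx
    exact ⟨x, hxb.le, rfl⟩
  · intro hy
    refine le_of_forall_gt_imp_ge_of_dense fun c hac => ?_
    obtain ⟨b, hab, hbc⟩ := exists_between hac
    obtain ⟨x, hxb, rfl⟩ := hy b ⟨hab, hbc.trans_le le_top⟩
    exact iInf₂_le_of_le x rfl (hxb.trans hbc.le)

theorem setOf_ofReal_norm_sq_le {E : Type*} [SeminormedAddCommGroup E] {b : ℝ≥0∞} (hb : b ≠ ⊤) :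
    {x : E | ENNReal.ofReal (‖x‖ ^ 2) ≤ b} = closedBall 0 √b.toReal := by
  ext x
  rw [mem_ofPred_eq, ENNReal.ofReal_le_iff_le_toReal hb, mem_closedBall_zero_iff,
    Real.le_sqrt (norm_nonneg x) ENNReal.toReal_nonneg]

/-- Condition (LD)₂ of the paper. -/
def WeakSubseqContinuousOnBalls {H S : Type*} [NormedAddCommGroup H] [InnerProductSpace ℝ H]
    [TopologicalSpace S] (Z₀ : H → S) : Prop :=
  ∀ N : ℝ, 0 < N → ∀ hn : ℕ → H, (∀ n, ‖hn n‖ ≤ N) → ∀ h : H,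
    (∀ φ : H, Tendsto (fun n => ⟪hn n, φ⟫) atTop (𝓝 ⟪h, φ⟫)) →
    ∃ k : ℕ → ℕ, StrictMono k ∧ Tendsto (fun j => Z₀ (hn (k j))) atTop (𝓝 (Z₀ h))

theorem WeakSubseqContinuousOnBalls.isSeqCompact_image_closedBall {H S : Type*}
    [NormedAddCommGroup H] [InnerProductSpace ℝ H] [CompleteSpace H]
    [TopologicalSpace.SeparableSpace H] [TopologicalSpace S] {Z₀ : H → S}
    (hZ₀ : WeakSubseqContinuousOnBalls Z₀) (r : ℝ) : IsSeqCompact (Z₀ '' closedBall 0 r) := by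
  intro f hf
  choose x hxr hxf using hf
  simp only [mem_closedBall_zero_iff] at hxr
  obtain ⟨y, hyr, k, hk, hweak⟩ := exists_subseq_weak_tendsto_of_norm_le (𝕜 := ℝ) hxr
  have hr : 0 < r + 1 := by linarith [norm_nonneg (x 0), hxr 0]
  obtain ⟨l, hl, hlim⟩ :=
    hZ₀ (r + 1) hr (x ∘ k) (fun n => (hxr (k n)).trans (lt_add_one r).le) y hweak
  refine ⟨Z₀ y, mem_image_of_mem Z₀ (mem_closedBall_zero_iff.mpr hyr), k ∘ l, hk.comp hl, ?_⟩
  simpa only [Function.comp_def, hxf] using hlim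

/-- Under condition (LD)₂, the rate function `I(f) = ½ inf{‖h‖² : Z₀(h) = f}`
has compact sublevel sets. -/
theorem stmt10 {H S : Type*}
    [NormedAddCommGroup H] [InnerProductSpace ℝ H] [CompleteSpace H]
    [SecondCountableTopology H]
    [MetricSpace S]
    (Z₀ : H → S)
    (hLD2 : ∀ N : ℝ, 0 < N → ∀ hn : ℕ → H, (∀ n, ‖hn n‖ ≤ N) → ∀ h : H,
      (∀ φ : H, Filter.Tendsto (fun n => ⟪hn n, φ⟫) Filter.atTop (nhds ⟪h, φ⟫)) →
      ∃ k : ℕ → ℕ, StrictMono k ∧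
        Filter.Tendsto (fun j => Z₀ (hn (k j))) Filter.atTop (nhds (Z₀ h)))
    (I : S → ℝ≥0∞)
    (hI : ∀ f, I f = (1/2 : ℝ≥0∞) * ⨅ (h : H) (_ : Z₀ h = f), ENNReal.ofReal (‖h‖ ^ 2)) :
    ∀ a : ℝ≥0∞, a < ⊤ → IsCompact {f : S | I f ≤ a} := by
  intro a ha
  have hball (b : ℝ≥0∞) (hb : b ∈ Ioo (2 * a) ⊤) :
      IsCompact (Z₀ '' {h : H | ENNReal.ofReal (‖h‖ ^ 2) ≤ b}) := by
    rw [setOf_ofReal_norm_sq_le hb.2.ne]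
    exact (WeakSubseqContinuousOnBalls.isSeqCompact_image_closedBall hLD2 _).isCompact
  have hsublevel : {f : S | I f ≤ a} =
      ⋂ b ∈ Ioo (2 * a) ⊤, Z₀ '' {h : H | ENNReal.ofReal (‖h‖ ^ 2) ≤ b} := by
    simp_rw [hI, one_div, ENNReal.inv_mul_le_iff two_ne_zero ENNReal.ofNat_ne_top]
    exact setOf_iInf_fiber_le_eq_biInter Z₀ _ (2 * a)
  obtain ⟨b₀, hb₀⟩ : (Ioo (2 * a) ⊤).Nonempty :=
    nonempty_Ioo.mpr (ENNReal.mul_lt_top ENNReal.ofNat_lt_top ha)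
  rw [hsublevel]
  exact (hball b₀ hb₀).of_isClosed_subset (isClosed_biInter fun b hb => (hball b hb).isClosed)
    (biInter_subset_of_mem hb₀)
end

section
/- Let A be a maximal monotone operator on R^m with a ∈ Int(D(A)). Then there exist γ > 0 and μ ≥ 0 such that ⟨y, x - a⟩ ≥ γ|y| - μ|x - a| - γμ for all (x, y) ∈ Gr(A). -/
open scoped RealInnerProductSpace

/-!
Choose `γ > 0` with `B̄(a, 2γ) ⊆ D(A)`. First, `A` is bounded on `B̄(a, γ)`: for `|b - a| ≤ γ` and a
unit vector `e`, the point `v = b + γe` lies in `D(A)` and `⟨e, v - b⟩ = γ > γ/2`; by compactness of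
`B̄(a, γ) × S`, with `S` the unit sphere, finitely many graph points `(v, w)` suffice, and for
`z ∈ A(b)` with `⟨z/|z|, v - b⟩ > γ/2`, monotonicity gives `|z| γ/2 < ⟨z, v - b⟩ ≤ ⟨w, v - b⟩ ≤ 3γ|w|`.
Then, for `(x, y) ∈ Gr(A)`, test monotonicity against a graph point `(b, z)` with
`b = a + γ y / |y|` and `|z| ≤ μ`: `⟨y, x - a⟩ = ⟨y, x - b⟩ + γ|y| ≥ ⟨z, x - b⟩ + γ|y|`.
-/

open Metric

section MonotoneOperator

variable {E : Type*} [NormedAddCommGroup E] [InnerProductSpace ℝ E] {A : E → Set E}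

theorem inner_le_inner_of_monotone
    (hmono : ∀ x₁ x₂ y₁ y₂, y₁ ∈ A x₁ → y₂ ∈ A x₂ → 0 ≤ ⟪y₁ - y₂, x₁ - x₂⟫)
    {x₁ x₂ y₁ y₂ : E} (h₁ : y₁ ∈ A x₁) (h₂ : y₂ ∈ A x₂) :
    ⟪y₁, x₂ - x₁⟫ ≤ ⟪y₂, x₂ - x₁⟫ := by
  have := hmono x₂ x₁ y₂ y₁ h₂ h₁
  rwa [inner_sub_left, sub_nonneg] at this

theorem norm_mul_le_of_lt_inner_normalize
    (hmono : ∀ x₁ x₂ y₁ y₂, y₁ ∈ A x₁ → y₂ ∈ A x₂ → 0 ≤ ⟪y₁ - y₂, x₁ - x₂⟫)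
    {b v z w : E} (hz : z ∈ A b) (hw : w ∈ A v) {c : ℝ} (hc : c < ⟪‖z‖⁻¹ • z, v - b⟫) :
    ‖z‖ * c ≤ ‖w‖ * ‖v - b‖ := by
  rcases eq_or_ne z 0 with rfl | hz0
  · simpa using by positivity
  rw [real_inner_smul_left, lt_inv_mul_iff₀ (norm_pos_iff.2 hz0)] at hc
  calc ‖z‖ * c ≤ ⟪z, v - b⟫ := hc.le
    _ ≤ ⟪w, v - b⟫ := inner_le_inner_of_monotone hmono hz hw
    _ ≤ ‖w‖ * ‖v - b‖ := real_inner_le_norm _ _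

theorem exists_norm_le_of_closedBall_subset_dom [ProperSpace E]
    (hmono : ∀ x₁ x₂ y₁ y₂, y₁ ∈ A x₁ → y₂ ∈ A x₂ → 0 ≤ ⟪y₁ - y₂, x₁ - x₂⟫)
    {a : E} {r : ℝ} (hr : 0 < r) (hdom : closedBall a (2 * r) ⊆ {x | (A x).Nonempty}) :
    ∃ μ, 0 ≤ μ ∧ ∀ b ∈ closedBall a r, ∀ z ∈ A b, ‖z‖ ≤ μ := by
  let G := {p : E × E // p.2 ∈ A p.1}
  let U : G → Set (E × E) := fun p => {q | r / 2 < ⟪q.2, p.1.1 - q.1⟫}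
  have hU : ∀ p, IsOpen (U p) := fun p =>
    isOpen_lt continuous_const (continuous_snd.inner (continuous_const.sub continuous_fst))
  -- `(b, e)` lies in the set indexed by any graph point over `b + r • e`.
  have hcover : closedBall a r ×ˢ sphere (0 : E) 1 ⊆ ⋃ p, U p := by
    rintro ⟨b, e⟩ ⟨hb, he⟩
    rw [mem_closedBall, dist_eq_norm] at hb
    rw [mem_sphere_zero_iff_norm] at he
    have hv : b + r • e ∈ closedBall a (2 * r) := by
      rw [mem_closedBall, dist_eq_norm, add_sub_right_comm]
      calc ‖b - a + r • e‖ ≤ ‖b - a‖ + ‖r • e‖ := norm_add_le _ _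
        _ ≤ 2 * r := by rw [norm_smul, he, Real.norm_of_nonneg hr.le]; linarith
    obtain ⟨w, hw⟩ := hdom hv
    refine Set.mem_iUnion.2 ⟨⟨(b + r • e, w), hw⟩, ?_⟩
    change r / 2 < ⟪e, b + r • e - b⟫
    rw [add_sub_cancel_left, real_inner_smul_right, real_inner_self_eq_norm_sq, he]
    linarith
  obtain ⟨t, ht⟩ := ((isCompact_closedBall a r).prod (isCompact_sphere 0 1)).elim_finite_subcover
    U hU hcover
  let c : G → ℝ := fun p => 2 * ‖p.1.2‖ * (‖p.1.1 - a‖ + r) / r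
  have hc : ∀ p ∈ t, 0 ≤ c p := fun p _ => by positivity
  refine ⟨∑ p ∈ t, c p, Finset.sum_nonneg hc, fun b hb z hz => ?_⟩
  rcases eq_or_ne z 0 with rfl | hz0
  · simpa using Finset.sum_nonneg hc
  have he : ‖z‖⁻¹ • z ∈ sphere (0 : E) 1 := by
    rw [mem_sphere_zero_iff_norm, norm_smul, norm_inv, norm_norm,
      inv_mul_cancel₀ (norm_ne_zero_iff.2 hz0)]
  obtain ⟨⟨⟨v, w⟩, hw⟩, hpt, hp⟩ :=
    Set.mem_iUnion₂.1 (ht (show (b, ‖z‖⁻¹ • z) ∈ _ from ⟨hb, he⟩))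
  have hvb : ‖v - b‖ ≤ ‖v - a‖ + r := by
    rw [mem_closedBall, dist_eq_norm'] at hb
    linarith [norm_sub_le_norm_sub_add_norm_sub v a b]
  have hzw : ‖z‖ * (r / 2) ≤ ‖w‖ * (‖v - a‖ + r) :=
    (norm_mul_le_of_lt_inner_normalize hmono hz hw hp).trans (by gcongr)
  calc ‖z‖ ≤ c ⟨(v, w), hw⟩ := by
        change ‖z‖ ≤ 2 * ‖w‖ * (‖v - a‖ + r) / r
        rw [le_div_iff₀ hr]
        linarith
    _ ≤ ∑ p ∈ t, c p := Finset.single_le_sum hc hpt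

theorem inner_sub_ge_of_exists_norm_le
    (hmono : ∀ x₁ x₂ y₁ y₂, y₁ ∈ A x₁ → y₂ ∈ A x₂ → 0 ≤ ⟪y₁ - y₂, x₁ - x₂⟫)
    {a : E} {r μ : ℝ} (hr : 0 ≤ r) (hbdd : ∀ b ∈ closedBall a r, ∃ z ∈ A b, ‖z‖ ≤ μ)
    {x y : E} (hy : y ∈ A x) :
    r * ‖y‖ - μ * ‖x - a‖ - r * μ ≤ ⟪y, x - a⟫ := by
  -- For `y = 0` the junk value `r / 0 = 0` gives `b = a`, and everything below still holds.
  set b := a + (r / ‖y‖) • y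
  have hba : b - a = (r / ‖y‖) • y := add_sub_cancel_left _ _
  have hnorm : ‖b - a‖ ≤ r := by
    rw [hba, norm_smul, Real.norm_of_nonneg (by positivity), div_mul_eq_mul_div]
    exact div_le_of_le_mul₀ (norm_nonneg _) hr le_rfl
  have hinner : ⟪y, b - a⟫ = r * ‖y‖ := by
    rw [hba, real_inner_smul_right, real_inner_self_eq_norm_sq]
    rcases eq_or_ne ‖y‖ 0 with h | h
    · simp [h]
    · field_simp
  obtain ⟨z, hz, hzμ⟩ := hbdd b (by rwa [mem_closedBall, dist_eq_norm])
  have hxb : ‖x - b‖ ≤ ‖x - a‖ + r := by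
    linarith [norm_sub_le_norm_sub_add_norm_sub x a b, norm_sub_rev a b]
  have hzx : -(μ * (‖x - a‖ + r)) ≤ ⟪z, x - b⟫ :=
    calc -(μ * (‖x - a‖ + r)) ≤ -(‖z‖ * ‖x - b‖) := by
          gcongr
          exact (norm_nonneg _).trans hzμ
      _ ≤ ⟪z, x - b⟫ := neg_le_of_abs_le (abs_real_inner_le_norm _ _)
  calc r * ‖y‖ - μ * ‖x - a‖ - r * μ ≤ ⟪z, x - b⟫ + ⟪y, b - a⟫ := by rw [hinner]; linarith
    _ ≤ ⟪y, x - b⟫ + ⟪y, b - a⟫ := by gcongr; exact inner_le_inner_of_monotone hmono hz hy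
    _ = ⟪y, x - a⟫ := by rw [← inner_add_right, sub_add_sub_cancel]

end MonotoneOperator

theorem stmt13_general {m : ℕ}
    (A : EuclideanSpace ℝ (Fin m) → Set (EuclideanSpace ℝ (Fin m)))
    (hmono : ∀ x₁ x₂ y₁ y₂, y₁ ∈ A x₁ → y₂ ∈ A x₂ → 0 ≤ ⟪y₁ - y₂, x₁ - x₂⟫)
    (a : EuclideanSpace ℝ (Fin m))
    (ha : a ∈ interior {x | (A x).Nonempty}) :
    ∃ γ : ℝ, 0 < γ ∧ ∃ μ : ℝ, 0 ≤ μ ∧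
      ∀ x y, y ∈ A x → γ * ‖y‖ - μ * ‖x - a‖ - γ * μ ≤ ⟪y, x - a⟫ := by
  obtain ⟨ε, hε, hball⟩ := nhds_basis_closedBall.mem_iff.1 (mem_interior_iff_mem_nhds.1 ha)
  have hdom : closedBall a (2 * (ε / 2)) ⊆ {x | (A x).Nonempty} := by
    rwa [mul_div_cancel₀ ε two_ne_zero]
  obtain ⟨μ, hμ, hbdd⟩ := exists_norm_le_of_closedBall_subset_dom hmono (half_pos hε) hdom
  have hsel : ∀ b ∈ closedBall a (ε / 2), ∃ z ∈ A b, ‖z‖ ≤ μ := fun b hb =>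
    (hdom (closedBall_subset_closedBall (by linarith) hb)).imp fun z hz => ⟨hz, hbdd b hb z hz⟩
  exact ⟨ε / 2, half_pos hε, μ, hμ, fun x y hy =>
    inner_sub_ge_of_exists_norm_le hmono (half_pos hε).le hsel hy⟩

/-- Cépa's pointwise estimate: for a maximal monotone `A` and `a ∈ Int(D(A))`,
there are `γ > 0`, `μ ≥ 0` with `⟨y, x - a⟩ ≥ γ|y| - μ|x - a| - γμ` on `Gr(A)`. -/
theorem stmt13 {m : ℕ}
    (A : EuclideanSpace ℝ (Fin m) → Set (EuclideanSpace ℝ (Fin m)))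
    (hmono : ∀ x₁ x₂ y₁ y₂, y₁ ∈ A x₁ → y₂ ∈ A x₂ → 0 ≤ ⟪y₁ - y₂, x₁ - x₂⟫)
    (hmax : ∀ x y, (∀ x' y', y' ∈ A x' → 0 ≤ ⟪y - y', x - x'⟫) → y ∈ A x)
    (a : EuclideanSpace ℝ (Fin m))
    (ha : a ∈ interior {x | (A x).Nonempty}) :
    ∃ γ : ℝ, 0 < γ ∧ ∃ μ : ℝ, 0 ≤ μ ∧
      ∀ x y, y ∈ A x → γ * ‖y‖ - μ * ‖x - a‖ - γ * μ ≤ ⟪y, x - a⟫ :=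
  stmt13_general A hmono a ha
end

section
/- Let A be a maximal monotone operator on R^m and a an interior point of D(A). Then A is locally bounded at a: there exist r > 0 and M ≥ 0 such that |y| ≤ M for all x with |x - a| ≤ r and all y ∈ A(x). -/
open scoped RealInnerProductSpace

/-!
Testing monotonicity against a point `p` of the domain with `v ∈ A p` gives
`⟪y, p - x⟫ ≤ ‖v‖ * ‖p - x‖` for every `y ∈ A x`. Around an interior point `a` of the domain,
take the finitely many test points `a ± ρ eᵢ` for an orthonormal basis `(eᵢ)`, with `ρ` small
enough that they lie in the domain, and let `K` bound the norms of chosen values of `A` there.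
For `x` close to `a` this bounds every coordinate `|⟪eᵢ, y⟫|` by `K` plus a small multiple of
`‖y‖`, and summing over the coordinates the small multiple is absorbed into the left-hand side.
-/

theorem OrthonormalBasis.norm_le_sum_abs_inner {ι E : Type*} [Fintype ι]
    [NormedAddCommGroup E] [InnerProductSpace ℝ E] (b : OrthonormalBasis ι ℝ E) (y : E) :
    ‖y‖ ≤ ∑ i, |⟪b i, y⟫| :=
  calc ‖y‖ = ‖∑ i, ⟪b i, y⟫ • b i‖ := by rw [b.sum_repr']
    _ ≤ ∑ i, ‖⟪b i, y⟫ • b i‖ := norm_sum_le _ _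
    _ = ∑ i, |⟪b i, y⟫| := by simp [norm_smul, b.orthonormal.1]

section MonotoneOperator

variable {E : Type*} [NormedAddCommGroup E] [InnerProductSpace ℝ E] {A : E → Set E}

def IsMonotoneOperator (A : E → Set E) : Prop :=
  ∀ x₁ x₂ y₁ y₂, y₁ ∈ A x₁ → y₂ ∈ A x₂ → 0 ≤ ⟪y₁ - y₂, x₁ - x₂⟫

theorem IsMonotoneOperator.inner_sub_le (hmono : IsMonotoneOperator A) {x y p v : E}
    (hy : y ∈ A x) (hv : v ∈ A p) :
    ⟪y, p - x⟫ ≤ ‖v‖ * ‖p - x‖ := by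
  have h := hmono x p y v hy hv
  rw [← neg_sub p x, inner_neg_right, inner_sub_left] at h
  linarith [real_inner_le_norm v (p - x)]

theorem IsMonotoneOperator.mul_inner_le (hmono : IsMonotoneOperator A) {a x y u v : E}
    {ρ r K : ℝ} (hρ : 0 ≤ ρ) (hu : ‖u‖ = 1) (hx : ‖x - a‖ ≤ r) (hy : y ∈ A x)
    (hv : v ∈ A (a + ρ • u)) (hvK : ‖v‖ ≤ K) :
    ρ * ⟪y, u⟫ ≤ K * (ρ + r) + r * ‖y‖ := by
  have hsplit : a + ρ • u - x = ρ • u - (x - a) := by abel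
  have hdist : ‖a + ρ • u - x‖ ≤ ρ + r := by
    rw [hsplit]
    calc ‖ρ • u - (x - a)‖ ≤ ‖ρ • u‖ + ‖x - a‖ := norm_sub_le _ _
      _ ≤ ρ + r := by rw [norm_smul, hu, Real.norm_of_nonneg hρ, mul_one]; linarith
  have htest := hmono.inner_sub_le hy hv
  rw [hsplit, inner_sub_right, real_inner_smul_right] at htest
  have hnear : ⟪y, x - a⟫ ≤ r * ‖y‖ := by
    nlinarith [real_inner_le_norm y (x - a), norm_nonneg y]
  have hfar : ‖v‖ * ‖a + ρ • u - x‖ ≤ K * (ρ + r) :=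
    mul_le_mul hvK hdist (norm_nonneg _) ((norm_nonneg v).trans hvK)
  rw [hsplit] at hfar
  linarith

theorem IsMonotoneOperator.exists_norm_le_of_mem_interior [FiniteDimensional ℝ E]
    (hmono : IsMonotoneOperator A) {a : E} (ha : a ∈ interior {x | (A x).Nonempty}) :
    ∃ r : ℝ, 0 < r ∧ ∃ M : ℝ, 0 ≤ M ∧
      ∀ x y, ‖x - a‖ ≤ r → y ∈ A x → ‖y‖ ≤ M := by
  set n := Module.finrank ℝ E
  let b := stdOrthonormalBasis ℝ E
  obtain ⟨ε, hε, hball⟩ := Metric.mem_nhds_iff.mp (mem_interior_iff_mem_nhds.mp ha)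
  obtain ⟨ρ, hρ, hρε⟩ : ∃ ρ, 0 < ρ ∧ ρ < ε := ⟨ε / 2, by positivity, by linarith⟩
  let u : Fin n × Bool → E := fun q => cond q.2 (b q.1) (-b q.1)
  have hu : ∀ q, ‖u q‖ = 1 := by
    rintro ⟨i, _ | _⟩ <;> simp [u, b.orthonormal.1 i]
  have hdom : ∀ q, (A (a + ρ • u q)).Nonempty := fun q => hball <| by
    rw [Metric.mem_ball, dist_eq_norm, add_sub_cancel_left, norm_smul, hu, mul_one,
      Real.norm_of_nonneg hρ.le]
    exact hρε
  choose v hv using hdom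
  set K := ∑ q, ‖v q‖
  have hvK : ∀ q, ‖v q‖ ≤ K := fun q =>
    Finset.single_le_sum (fun q _ => norm_nonneg (v q)) (Finset.mem_univ q)
  have hK0 : 0 ≤ K := Finset.sum_nonneg fun q _ => norm_nonneg (v q)
  set r := ρ / (2 * (n + 1))
  have hr : 0 < r := by positivity
  refine ⟨r, hr, 4 * n * K, by positivity, fun x y hx hy => ?_⟩
  have hcoord : ∀ i, ρ * |⟪b i, y⟫| ≤ K * (ρ + r) + r * ‖y‖ := fun i => by
    have hpos := hmono.mul_inner_le hρ.le (hu (i, true)) hx hy (hv _) (hvK _)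
    have hneg := hmono.mul_inner_le hρ.le (hu (i, false)) hx hy (hv _) (hvK _)
    simp only [u, cond_true, cond_false, inner_neg_right] at hpos hneg
    rw [real_inner_comm]
    rcases abs_cases ⟪y, b i⟫ with ⟨habs, _⟩ | ⟨habs, _⟩ <;> rw [habs] <;> linarith
  have hsum : ρ * ‖y‖ ≤ n * (K * (ρ + r) + r * ‖y‖) := by
    calc ρ * ‖y‖ ≤ ρ * ∑ i, |⟪b i, y⟫| :=
          mul_le_mul_of_nonneg_left (b.norm_le_sum_abs_inner y) hρ.le
      _ = ∑ i, ρ * |⟪b i, y⟫| := Finset.mul_sum _ _ _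
      _ ≤ ∑ _i : Fin n, (K * (ρ + r) + r * ‖y‖) := Finset.sum_le_sum fun i _ => hcoord i
      _ = n * (K * (ρ + r) + r * ‖y‖) := by
          rw [Finset.sum_const, Finset.card_univ, Fintype.card_fin, nsmul_eq_mul]
  have hρr : 2 * (n + 1) * r = ρ := mul_div_cancel₀ ρ (by positivity)
  have hnr : n * r ≤ ρ / 2 := by linarith
  have hrρ : r ≤ ρ := by nlinarith [n.cast_nonneg (α := ℝ)]
  have hK : n * K * (ρ + r) ≤ 2 * n * K * ρ := by
    nlinarith [mul_nonneg (n.cast_nonneg (α := ℝ)) hK0]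
  nlinarith [norm_nonneg y]

end MonotoneOperator

theorem stmt14_general {m : ℕ}
    (A : EuclideanSpace ℝ (Fin m) → Set (EuclideanSpace ℝ (Fin m)))
    (hmono : ∀ x₁ x₂ y₁ y₂, y₁ ∈ A x₁ → y₂ ∈ A x₂ → 0 ≤ ⟪y₁ - y₂, x₁ - x₂⟫)
    (a : EuclideanSpace ℝ (Fin m))
    (ha : a ∈ interior {x | (A x).Nonempty}) :
    ∃ r : ℝ, 0 < r ∧ ∃ M : ℝ, 0 ≤ M ∧
      ∀ x y, ‖x - a‖ ≤ r → y ∈ A x → ‖y‖ ≤ M := by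
  exact IsMonotoneOperator.exists_norm_le_of_mem_interior hmono ha

/-- A maximal monotone operator is locally bounded at interior points of its domain. -/
theorem stmt14 {m : ℕ}
    (A : EuclideanSpace ℝ (Fin m) → Set (EuclideanSpace ℝ (Fin m)))
    (hmono : ∀ x₁ x₂ y₁ y₂, y₁ ∈ A x₁ → y₂ ∈ A x₂ → 0 ≤ ⟪y₁ - y₂, x₁ - x₂⟫)
    (hmax : ∀ x y, (∀ x' y', y' ∈ A x' → 0 ≤ ⟪y - y', x - x'⟫) → y ∈ A x)
    (a : EuclideanSpace ℝ (Fin m))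
    (ha : a ∈ interior {x | (A x).Nonempty}) :
    ∃ r : ℝ, 0 < r ∧ ∃ M : ℝ, 0 ≤ M ∧
      ∀ x y, ‖x - a‖ ≤ r → y ∈ A x → ‖y‖ ≤ M :=
  stmt14_general A hmono a ha
end
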